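/- Let g be the pp-wave metric on ℝ⁴ with smooth profile H, let m ≠ 0 be real, and let Y be a smooth vector field on ℝ⁴ with (L_Y g)_{μν} = 2ω g_{μν} for some smooth function ω (a conformal Killing vector of g). Let (u,v,x,y,n) : I → ℝ⁵, n > 0, be a solution of the pp-wave einbein Euler–Lagrange system. Then u̇/n is constant on I; write π_v for this constant and assume π_v ≠ 0. Define the distortion vector field f^μ = (u/2)·∂Y^μ/∂v + (m²u²/(8π_v²))·∂²Y^μ/∂v² + (1/2)·δ^μ_v·Y^u (where δ^μ_v Y^u means the vector field whose only nonzero component is Y^u in the v-direction), and set Υ^μ = Y^μ + (m²/π_v²)f^μ. Then the function λ ↦ Σ_{μ,ν} Υ^μ(x̄(λ)) g_{μν}(x̄(λ)) ẋ̄^ν(λ)/n(λ), where x̄ = (u,v,x,y), is constant on I. -/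

import Mathlib

/-- Partial derivative of a scalar function on ℝ^N in the i-th coordinate direction. -/
noncomputable def pd {N : ℕ} (f : (Fin N → ℝ) → ℝ) (i : Fin N) (x : Fin N → ℝ) : ℝ :=
  fderiv ℝ f x (Pi.single i 1)

/-- Lie derivative of a covariant 2-tensor field `T` along the vector field `V`. -/
noncomputable def lieD {N : ℕ} (V : (Fin N → ℝ) → Fin N → ℝ)
    (T : (Fin N → ℝ) → Fin N → Fin N → ℝ) (x : Fin N → ℝ) (μ ν : Fin N) : ℝ :=
  ∑ σ, (V x σ * pd (fun y => T y μ ν) σ x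
    + T x σ ν * pd (fun y => V y σ) μ x
    + T x μ σ * pd (fun y => V y σ) ν x)

/-- pp-wave metric on ℝ⁴ with coordinates (u,v,x,y) = indices (0,1,2,3) and profile H:
g_{uu} = H, g_{uv} = g_{vu} = 1, g_{xx} = g_{yy} = 1, all other components zero. -/
noncomputable def ppMetric (H : (Fin 4 → ℝ) → ℝ) (x : Fin 4 → ℝ) (μ ν : Fin 4) : ℝ :=
  if μ = 0 ∧ ν = 0 then H x
  else if (μ = 0 ∧ ν = 1) ∨ (μ = 1 ∧ ν = 0) then 1
  else if (μ = 2 ∧ ν = 2) ∨ (μ = 3 ∧ ν = 3) then 1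
  else 0

section toolkit
variable {F G : (Fin 4 → ℝ) → ℝ} {i j σ : Fin 4} {x : Fin 4 → ℝ}

lemma pd_const (c : ℝ) : pd (fun _ : Fin 4 → ℝ => c) i x = 0 := by
  simp [pd]

lemma pd_add (hF : Differentiable ℝ F) (hG : Differentiable ℝ G) :
    pd (fun y => F y + G y) i x = pd F i x + pd G i x := by
  simp [pd, fderiv_fun_add (hF x) (hG x)]

lemma pd_mul (hF : Differentiable ℝ F) (hG : Differentiable ℝ G) :
    pd (fun y => F y * G y) i x = pd F i x * G x + F x * pd G i x := by
  simp [pd, fderiv_fun_mul (hF x) (hG x)]; ring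

lemma pd_const_mul (c : ℝ) (hF : Differentiable ℝ F) :
    pd (fun y => c * F y) i x = c * pd F i x := by
  simp [pd, fderiv_const_mul (hF x)]

lemma pd_neg (hF : Differentiable ℝ F) :
    pd (fun y => -(F y)) i x = -(pd F i x) := by
  have := pd_const_mul (F := F) (i := i) (x := x) (-1) hF
  simpa using this

lemma pd_sub (hF : Differentiable ℝ F) (hG : Differentiable ℝ G) :
    pd (fun y => F y - G y) i x = pd F i x - pd G i x := by
  have : (fun y => F y - G y) = fun y => F y + (-1) * G y := by funext y; ring
  rw [this, pd_add hF (by fun_prop), pd_const_mul (-1) hG]; ring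

lemma pd_coord : pd (fun y : Fin 4 → ℝ => y j) i x = if j = i then 1 else 0 := by
  have : (fun y : Fin 4 → ℝ => y j) = fun y => (ContinuousLinearMap.proj (R := ℝ) (φ := fun _ : Fin 4 => ℝ) j) y := rfl
  rw [pd, this, ContinuousLinearMap.fderiv]
  simp [Pi.single_apply]

lemma contDiff_pd (hF : ContDiff ℝ (⊤ : ℕ∞) F) (i : Fin 4) : ContDiff ℝ (⊤ : ℕ∞) (pd F i) := by
  have h1 : ContDiff ℝ (⊤ : ℕ∞) (fderiv ℝ F) := hF.fderiv_right (by simp)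
  exact h1.clm_apply contDiff_const

lemma pd_comm (hF : ContDiff ℝ (⊤ : ℕ∞) F) : pd (pd F i) j x = pd (pd F j) i x := by
  have hsymm := (hF.contDiffAt (x := x)).isSymmSndFDerivAt (by rw [minSmoothness_of_isRCLikeNormedField]; exact WithTop.coe_le_coe.2 le_top)
  have hdF : ContDiff ℝ (⊤ : ℕ∞) (fderiv ℝ F) := hF.fderiv_right (by simp)
  have key : ∀ k l : Fin 4, pd (pd F k) l x
      = fderiv ℝ (fderiv ℝ F) x (Pi.single l 1) (Pi.single k 1) := by
    intro k l
    unfold pd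
    rw [fderiv_clm_apply ((hdF.differentiable (by simp)) x) (differentiableAt_const _)]
    simp
  rw [key, key]
  exact hsymm _ _

lemma pd_x0_mul (hF : ContDiff ℝ (⊤ : ℕ∞) F) :
    pd (fun y => y 0 * F y) σ x
      = (if (0:Fin 4) = σ then 1 else 0) * F x + x 0 * pd F σ x := by
  rw [pd_mul (by fun_prop) (hF.differentiable (by simp)), pd_coord]

lemma pd_x0sq_mul (hF : ContDiff ℝ (⊤ : ℕ∞) F) :
    pd (fun y => (y 0)^2 * F y) σ x
      = (if (0:Fin 4) = σ then 1 else 0) * (2 * x 0 * F x) + (x 0)^2 * pd F σ x := by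
  have h1 : (fun y : Fin 4 → ℝ => (y 0)^2 * F y) = fun y => y 0 * (y 0 * F y) := by
    funext y; ring
  rw [h1, pd_x0_mul (by fun_prop), pd_x0_mul hF]
  rcases eq_or_ne (0 : Fin 4) σ with h | h <;> simp [h] <;> ring
end toolkit

lemma clm_apply_sum (L : (Fin 4 → ℝ) →L[ℝ] ℝ) (w : Fin 4 → ℝ) :
    L w = ∑ i, w i * L (Pi.single i 1) := by
  have : w = ∑ i, w i • (Pi.single i (1:ℝ) : Fin 4 → ℝ) := by
    funext j
    simp [Pi.single_apply, Finset.sum_apply]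
  conv_lhs => rw [this]
  rw [map_sum]
  simp

lemma chain_rule {F : (Fin 4 → ℝ) → ℝ} (hF : ContDiff ℝ (⊤ : ℕ∞) F)
    {c : ℝ → Fin 4 → ℝ} {c' : Fin 4 → ℝ} {t : ℝ}
    (hc : ∀ i, HasDerivAt (fun s => c s i) (c' i) t) :
    HasDerivAt (fun s => F (c s)) (∑ i, pd F i (c t) * c' i) t := by
  have hcd : HasDerivAt c c' t := hasDerivAt_pi.2 hc
  have hFd : HasFDerivAt F (fderiv ℝ F (c t)) (c t) :=
    (hF.differentiable (by simp) (c t)).hasFDerivAt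
  have := hFd.comp_hasDerivAt t hcd
  refine this.congr_deriv ?_
  rw [clm_apply_sum]
  simp [pd, mul_comm]

lemma pd_one_eq_zero {H : (Fin 4 → ℝ) → ℝ} (hH : ContDiff ℝ (⊤ : ℕ∞) H)
    (hind : ∀ x : Fin 4 → ℝ, ∀ r : ℝ, H (Function.update x 1 r) = H x) (x : Fin 4 → ℝ) :
    pd H 1 x = 0 := by
  set e : Fin 4 → ℝ := Pi.single 1 (1:ℝ) with he
  have hline : ∀ r : ℝ, H (x + r • e) = H x := by
    intro r
    have : x + r • e = Function.update x 1 (x 1 + r) := by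
      funext j
      rcases eq_or_ne j 1 with h | h <;> simp [he, h, Function.update_apply, Pi.single_apply]
    rw [this, hind]
  have h1 : HasDerivAt (fun r : ℝ => H (x + r • e)) (pd H 1 x) 0 := by
    have hc : HasDerivAt (fun r : ℝ => x + r • e) e 0 := by
      simpa using ((hasDerivAt_id (0:ℝ)).smul_const e).const_add x
    have hFd : HasFDerivAt H (fderiv ℝ H x) x := (hH.differentiable (by simp) x).hasFDerivAt
    have hFd2 : HasFDerivAt H (fderiv ℝ H x) (x + (0:ℝ) • e) := by simpa using hFd
    have h2 := hFd2.comp_hasDerivAt 0 hc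
    exact h2
  have h2 : HasDerivAt (fun r : ℝ => H (x + r • e)) 0 0 := by
    have : (fun r : ℝ => H (x + r • e)) = fun _ => H x := funext hline
    rw [this]; exact hasDerivAt_const _ _
  exact h1.unique h2
set_option maxHeartbeats 1000000 in
theorem stmt6
    (H : (Fin 4 → ℝ) → ℝ)
    (hH_smooth : ContDiff ℝ (⊤ : ℕ∞) H)
    (hH_indep : ∀ x : Fin 4 → ℝ, ∀ r : ℝ, H (Function.update x 1 r) = H x)
    (m : ℝ) (hm : m ≠ 0)
    (Y : (Fin 4 → ℝ) → Fin 4 → ℝ) (ω : (Fin 4 → ℝ) → ℝ)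
    (hY_smooth : ∀ μ, ContDiff ℝ (⊤ : ℕ∞) (fun x => Y x μ))
    (hω_smooth : ContDiff ℝ (⊤ : ℕ∞) ω)
    (hCKV : ∀ x μ ν, lieD Y (ppMetric H) x μ ν = 2 * ω x * ppMetric H x μ ν)
    (a b : ℝ) (c : ℝ → Fin 4 → ℝ) (n : ℝ → ℝ)
    (hc : ∀ μ, ContDiffOn ℝ (⊤ : ℕ∞) (fun t => c t μ) (Set.Ioo a b))
    (hn : ContDiffOn ℝ (⊤ : ℕ∞) n (Set.Ioo a b))
    (hnpos : ∀ t ∈ Set.Ioo a b, 0 < n t)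
    -- (i) the einbein (Hamiltonian) constraint
    (heq1 : ∀ t ∈ Set.Ioo a b,
      H (c t) * (deriv (fun s => c s 0) t) ^ 2
        + 2 * deriv (fun s => c s 0) t * deriv (fun s => c s 1) t
        + (deriv (fun s => c s 2) t) ^ 2 + (deriv (fun s => c s 3) t) ^ 2
        + n t ^ 2 * m ^ 2 = 0)
    -- (ii) the v̈ equation
    (heq2 : ∀ t ∈ Set.Ioo a b,
      deriv (fun s => deriv (fun r => c r 1) s) t
        + pd H 2 (c t) * deriv (fun s => c s 2) t * deriv (fun s => c s 0) t
        + pd H 3 (c t) * deriv (fun s => c s 3) t * deriv (fun s => c s 0) t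
        + (1 / 2) * pd H 0 (c t) * (deriv (fun s => c s 0) t) ^ 2
        - deriv n t / n t * deriv (fun s => c s 1) t = 0)
    -- (iii) the ü equation
    (heq3 : ∀ t ∈ Set.Ioo a b,
      deriv (fun s => deriv (fun r => c r 0) s) t
        - deriv n t / n t * deriv (fun s => c s 0) t = 0)
    -- (iv) the ẍ, ÿ equations
    (heq4 : ∀ t ∈ Set.Ioo a b,
      (deriv (fun s => deriv (fun r => c r 2) s) t
          - (1 / 2) * pd H 2 (c t) * (deriv (fun s => c s 0) t) ^ 2
          - deriv n t / n t * deriv (fun s => c s 2) t = 0)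
      ∧ (deriv (fun s => deriv (fun r => c r 3) s) t
          - (1 / 2) * pd H 3 (c t) * (deriv (fun s => c s 0) t) ^ 2
          - deriv n t / n t * deriv (fun s => c s 3) t = 0))
    -- u̇/n is constant on I (a consequence of (iii)); πv denotes this constant
    (πv : ℝ) (hπv : ∀ t ∈ Set.Ioo a b, deriv (fun s => c s 0) t / n t = πv)
    (hπv0 : πv ≠ 0)
    -- the mass-dependent distortion f of the conformal Killing vector Y
    (f : (Fin 4 → ℝ) → Fin 4 → ℝ)
    (hf : f = fun x μ => (x 0 / 2) * pd (fun y => Y y μ) 1 x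
        + (m ^ 2 * (x 0) ^ 2 / (8 * πv ^ 2)) * pd (fun y => pd (fun z => Y z μ) 1 y) 1 x
        + (1 / 2) * (if μ = 1 then Y x 0 else 0))
    (Υ : (Fin 4 → ℝ) → Fin 4 → ℝ)
    (hΥ : Υ = fun x μ => Y x μ + (m ^ 2 / πv ^ 2) * f x μ) :
    ∀ t₁ ∈ Set.Ioo a b, ∀ t₂ ∈ Set.Ioo a b,
      (∑ μ, ∑ ν, Υ (c t₁) μ * ppMetric H (c t₁) μ ν * deriv (fun s => c s ν) t₁) / n t₁
      = (∑ μ, ∑ ν, Υ (c t₂) μ * ppMetric H (c t₂) μ ν * deriv (fun s => c s ν) t₂) / n t₂ := by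
  -- smoothness abbreviations
  have sY : ∀ μ, ContDiff ℝ (⊤ : ℕ∞) (fun x => Y x μ) := hY_smooth
  have hH1 : ∀ x, pd H 1 x = 0 := pd_one_eq_zero hH_smooth hH_indep
  -- CKV component identities
  have I11 : ∀ x, pd (fun y => Y y 0) 1 x = 0 := by
    intro x
    have h := hCKV x 1 1
    simp [lieD, ppMetric, Fin.sum_univ_four, pd_const] at h
    linarith
  have I12 : ∀ x, pd (fun y => Y y 2) 1 x = -(pd (fun y => Y y 0) 2 x) := by
    intro x
    have h := hCKV x 1 2
    simp [lieD, ppMetric, Fin.sum_univ_four, pd_const] at h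
    linarith
  have I13 : ∀ x, pd (fun y => Y y 3) 1 x = -(pd (fun y => Y y 0) 3 x) := by
    intro x
    have h := hCKV x 1 3
    simp [lieD, ppMetric, Fin.sum_univ_four, pd_const] at h
    linarith
  have I01 : ∀ x, pd (fun y => Y y 1) 1 x = 2 * ω x - pd (fun y => Y y 0) 0 x := by
    intro x
    have h := hCKV x 0 1
    simp [lieD, ppMetric, Fin.sum_univ_four, pd_const, I11] at h
    linarith
  have I22 : ∀ x, pd (fun y => Y y 2) 2 x = ω x := by
    intro x
    have h := hCKV x 2 2
    simp [lieD, ppMetric, Fin.sum_univ_four, pd_const] at h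
    linarith
  have I33 : ∀ x, pd (fun y => Y y 3) 3 x = ω x := by
    intro x
    have h := hCKV x 3 3
    simp [lieD, ppMetric, Fin.sum_univ_four, pd_const] at h
    linarith
  have I23 : ∀ x, pd (fun y => Y y 3) 2 x = -(pd (fun y => Y y 2) 3 x) := by
    intro x
    have h := hCKV x 2 3
    simp [lieD, ppMetric, Fin.sum_univ_four, pd_const] at h
    linarith
  have I02 : ∀ x, pd (fun y => Y y 2) 0 x
      = -(H x * pd (fun y => Y y 0) 2 x) - pd (fun y => Y y 1) 2 x := by
    intro x
    have h := hCKV x 0 2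
    simp [lieD, ppMetric, Fin.sum_univ_four, pd_const] at h
    linarith
  have I03 : ∀ x, pd (fun y => Y y 3) 0 x
      = -(H x * pd (fun y => Y y 0) 3 x) - pd (fun y => Y y 1) 3 x := by
    intro x
    have h := hCKV x 0 3
    simp [lieD, ppMetric, Fin.sum_univ_four, pd_const] at h
    linarith
  have I00 : ∀ x, pd (fun y => Y y 1) 0 x
      = ω x * H x - (Y x 0 * pd H 0 x + Y x 2 * pd H 2 x + Y x 3 * pd H 3 x) / 2
        - H x * pd (fun y => Y y 0) 0 x := by
    intro x
    have h := hCKV x 0 0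
    simp [lieD, ppMetric, Fin.sum_univ_four, pd_const, hH1] at h
    linarith
  -- differentiability/smoothness registry
  have dH : Differentiable ℝ H := hH_smooth.differentiable (by simp)
  have dω : Differentiable ℝ ω := hω_smooth.differentiable (by simp)
  have dY : ∀ μ, Differentiable ℝ (fun x => Y x μ) := fun μ => (sY μ).differentiable (by simp)
  have sPY : ∀ μ i, ContDiff ℝ (⊤ : ℕ∞) (pd (fun y => Y y μ) i) := fun μ i => contDiff_pd (sY μ) i
  have dPY : ∀ μ i, Differentiable ℝ (pd (fun y => Y y μ) i) :=
    fun μ i => (sPY μ i).differentiable (by simp)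
  have sPH : ∀ i, ContDiff ℝ (⊤ : ℕ∞) (pd H i) := fun i => contDiff_pd hH_smooth i
  have dPH : ∀ i, Differentiable ℝ (pd H i) := fun i => (sPH i).differentiable (by simp)
  have sPω : ∀ i, ContDiff ℝ (⊤ : ℕ∞) (pd ω i) := fun i => contDiff_pd hω_smooth i
  have dPω : ∀ i, Differentiable ℝ (pd ω i) := fun i => (sPω i).differentiable (by simp)
  have dPPY : ∀ μ i j, Differentiable ℝ (pd (pd (fun y => Y y μ) i) j) :=
    fun μ i j => (contDiff_pd (sPY μ i) j).differentiable (by simp)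
  -- function-level versions of the first-order identities
  have hF11 : pd (fun y => Y y 0) 1 = fun _ => (0:ℝ) := funext I11
  have hF12 : pd (fun y => Y y 2) 1 = fun x => -(pd (fun y => Y y 0) 2 x) := funext I12
  have hF13 : pd (fun y => Y y 3) 1 = fun x => -(pd (fun y => Y y 0) 3 x) := funext I13
  have hF01 : pd (fun y => Y y 1) 1 = fun x => 2 * ω x - pd (fun y => Y y 0) 0 x := funext I01
  have hF22 : pd (fun y => Y y 2) 2 = ω := funext I22
  have hF33 : pd (fun y => Y y 3) 3 = ω := funext I33
  have I23' : ∀ x, pd (fun y => Y y 2) 3 x = -(pd (fun y => Y y 3) 2 x) := by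
    intro x; linarith [I23 x]
  have hF23 : pd (fun y => Y y 2) 3 = fun x => -(pd (fun y => Y y 3) 2 x) := funext I23'
  have hF02 : pd (fun y => Y y 2) 0
      = fun x => -(H x * pd (fun y => Y y 0) 2 x) - pd (fun y => Y y 1) 2 x := funext I02
  have hF03 : pd (fun y => Y y 3) 0
      = fun x => -(H x * pd (fun y => Y y 0) 3 x) - pd (fun y => Y y 1) 3 x := funext I03
  have hFH1 : pd H 1 = fun _ => (0:ℝ) := funext hH1
  -- second-order identities
  have JA : ∀ (j : Fin 4) x, pd (pd (fun y => Y y 0) 1) j x = 0 := by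
    intro j x; rw [hF11]; exact pd_const 0
  have Jd1 : ∀ x, pd (pd (fun y => Y y 0) 0) 1 x = 0 := by
    intro x; rw [pd_comm (sY 0)]; exact JA 0 x
  have Jc21 : ∀ x, pd (pd (fun y => Y y 0) 2) 1 x = 0 := by
    intro x; rw [pd_comm (sY 0)]; exact JA 2 x
  have Jc31 : ∀ x, pd (pd (fun y => Y y 0) 3) 1 x = 0 := by
    intro x; rw [pd_comm (sY 0)]; exact JA 3 x
  have Jc22 : ∀ x, pd (pd (fun y => Y y 0) 2) 2 x = -(pd ω 1 x) := by
    intro x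
    have h1 : pd (pd (fun y => Y y 2) 1) 2 x = pd (pd (fun y => Y y 2) 2) 1 x := pd_comm (sY 2)
    rw [hF12, hF22] at h1
    rw [pd_neg (dPY 0 2)] at h1
    linarith
  have Jc33 : ∀ x, pd (pd (fun y => Y y 0) 3) 3 x = -(pd ω 1 x) := by
    intro x
    have h1 : pd (pd (fun y => Y y 3) 1) 3 x = pd (pd (fun y => Y y 3) 3) 1 x := pd_comm (sY 3)
    rw [hF13, hF33] at h1
    rw [pd_neg (dPY 0 3)] at h1
    linarith
  have Jc23 : ∀ x, pd (pd (fun y => Y y 0) 2) 3 x = 0 := by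
    intro x
    have h1 : pd (pd (fun y => Y y 2) 1) 3 x = pd (pd (fun y => Y y 2) 3) 1 x := pd_comm (sY 2)
    rw [hF12, hF23] at h1
    rw [pd_neg (dPY 0 2), pd_neg (dPY 3 2)] at h1
    have h2 : pd (pd (fun y => Y y 3) 2) 1 x = pd (pd (fun y => Y y 3) 1) 2 x := pd_comm (sY 3)
    rw [hF13, pd_neg (dPY 0 3)] at h2
    have h3 : pd (pd (fun y => Y y 0) 3) 2 x = pd (pd (fun y => Y y 0) 2) 3 x := pd_comm (sY 0)
    linarith
  have Jc32 : ∀ x, pd (pd (fun y => Y y 0) 3) 2 x = 0 := by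
    intro x; rw [pd_comm (sY 0)]; exact Jc23 x
  have Jω2 : ∀ x, pd ω 2 x = pd (pd (fun y => Y y 0) 2) 0 x := by
    intro x
    have h1 : pd (pd (fun y => Y y 2) 0) 1 x = pd (pd (fun y => Y y 2) 1) 0 x := pd_comm (sY 2)
    rw [hF02, hF12, pd_neg (dPY 0 2)] at h1
    have h2 : pd (fun x => -(H x * pd (fun y => Y y 0) 2 x) - pd (fun y => Y y 1) 2 x) 1 x
        = -(pd H 1 x * pd (fun y => Y y 0) 2 x + H x * pd (pd (fun y => Y y 0) 2) 1 x)
          - pd (pd (fun y => Y y 1) 2) 1 x := by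
      rw [pd_sub (by fun_prop) (dPY 1 2), pd_neg (by fun_prop), pd_mul dH (dPY 0 2)]
    rw [h2, hH1, Jc21] at h1
    have h3 : pd (pd (fun y => Y y 1) 2) 1 x = pd (pd (fun y => Y y 1) 1) 2 x := pd_comm (sY 1)
    rw [hF01] at h3
    have h4 : pd (fun x => 2 * ω x - pd (fun y => Y y 0) 0 x) 2 x
        = 2 * pd ω 2 x - pd (pd (fun y => Y y 0) 0) 2 x := by
      rw [pd_sub (by fun_prop) (dPY 0 0), pd_const_mul 2 dω]
    rw [h4] at h3
    have h5 : pd (pd (fun y => Y y 0) 0) 2 x = pd (pd (fun y => Y y 0) 2) 0 x := pd_comm (sY 0)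
    linarith
  have Jω3 : ∀ x, pd ω 3 x = pd (pd (fun y => Y y 0) 3) 0 x := by
    intro x
    have h1 : pd (pd (fun y => Y y 3) 0) 1 x = pd (pd (fun y => Y y 3) 1) 0 x := pd_comm (sY 3)
    rw [hF03, hF13, pd_neg (dPY 0 3)] at h1
    have h2 : pd (fun x => -(H x * pd (fun y => Y y 0) 3 x) - pd (fun y => Y y 1) 3 x) 1 x
        = -(pd H 1 x * pd (fun y => Y y 0) 3 x + H x * pd (pd (fun y => Y y 0) 3) 1 x)
          - pd (pd (fun y => Y y 1) 3) 1 x := by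
      rw [pd_sub (by fun_prop) (dPY 1 3), pd_neg (by fun_prop), pd_mul dH (dPY 0 3)]
    rw [h2, hH1, Jc31] at h1
    have h3 : pd (pd (fun y => Y y 1) 3) 1 x = pd (pd (fun y => Y y 1) 1) 3 x := pd_comm (sY 1)
    rw [hF01] at h3
    have h4 : pd (fun x => 2 * ω x - pd (fun y => Y y 0) 0 x) 3 x
        = 2 * pd ω 3 x - pd (pd (fun y => Y y 0) 0) 3 x := by
      rw [pd_sub (by fun_prop) (dPY 0 0), pd_const_mul 2 dω]
    rw [h4] at h3
    have h5 : pd (pd (fun y => Y y 0) 0) 3 x = pd (pd (fun y => Y y 0) 3) 0 x := pd_comm (sY 0)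
    linarith
  have JH : ∀ (i : Fin 4) x, pd (pd H i) 1 x = 0 := by
    intro i x; rw [pd_comm hH_smooth, hFH1]; exact pd_const 0
  have I00' : ∀ x, pd (fun y => Y y 1) 0 x
      = ω x * H x - (1/2) * (Y x 0 * pd H 0 x + Y x 2 * pd H 2 x + Y x 3 * pd H 3 x)
        - H x * pd (fun y => Y y 0) 0 x := by
    intro x; rw [I00]; ring
  have hF00 : pd (fun y => Y y 1) 0
      = fun x => ω x * H x - (1/2) * (Y x 0 * pd H 0 x + Y x 2 * pd H 2 x + Y x 3 * pd H 3 x)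
        - H x * pd (fun y => Y y 0) 0 x := funext I00'
  have hstar : ∀ x, pd (pd (fun y => Y y 0) 0) 0 x
      = 2 * pd ω 0 x - pd ω 1 x * H x
        - (1/2) * (pd (fun y => Y y 0) 2 x * pd H 2 x + pd (fun y => Y y 0) 3 x * pd H 3 x) := by
    intro x
    have h1 : pd (pd (fun y => Y y 1) 0) 1 x = pd (pd (fun y => Y y 1) 1) 0 x := pd_comm (sY 1)
    rw [hF00, hF01] at h1
    have hL : pd (fun x => ω x * H x
          - (1/2) * (Y x 0 * pd H 0 x + Y x 2 * pd H 2 x + Y x 3 * pd H 3 x)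
          - H x * pd (fun y => Y y 0) 0 x) 1 x
        = (pd ω 1 x * H x + ω x * pd H 1 x)
          - (1/2) * ((pd (fun y => Y y 0) 1 x * pd H 0 x + Y x 0 * pd (pd H 0) 1 x)
            + (pd (fun y => Y y 2) 1 x * pd H 2 x + Y x 2 * pd (pd H 2) 1 x)
            + (pd (fun y => Y y 3) 1 x * pd H 3 x + Y x 3 * pd (pd H 3) 1 x))
          - (pd H 1 x * pd (fun y => Y y 0) 0 x + H x * pd (pd (fun y => Y y 0) 0) 1 x) := by
      rw [pd_sub (by fun_prop) (by fun_prop), pd_sub (by fun_prop) (by fun_prop),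
        pd_mul dω dH, pd_mul dH (dPY 0 0), pd_const_mul _ (by fun_prop),
        pd_add (by fun_prop) (by fun_prop), pd_add (by fun_prop) (by fun_prop),
        pd_mul (dY 0) (dPH 0), pd_mul (dY 2) (dPH 2), pd_mul (dY 3) (dPH 3)]
    rw [hL] at h1
    have hR : pd (fun x => 2 * ω x - pd (fun y => Y y 0) 0 x) 0 x
        = 2 * pd ω 0 x - pd (pd (fun y => Y y 0) 0) 0 x := by
      rw [pd_sub (by fun_prop) (dPY 0 0), pd_const_mul 2 dω]
    rw [hR, hH1, I11, I12, I13, Jd1, JH 0, JH 2, JH 3] at h1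
    linarith
  have hFstar : pd (pd (fun y => Y y 0) 0) 0
      = fun x => 2 * pd ω 0 x - pd ω 1 x * H x
        - (1/2) * (pd (fun y => Y y 0) 2 x * pd H 2 x + pd (fun y => Y y 0) 3 x * pd H 3 x) :=
    funext hstar
  have hFc21 : pd (pd (fun y => Y y 0) 2) 1 = fun _ => (0:ℝ) := funext Jc21
  have hFc31 : pd (pd (fun y => Y y 0) 3) 1 = fun _ => (0:ℝ) := funext Jc31
  have hFd1 : pd (pd (fun y => Y y 0) 0) 1 = fun _ => (0:ℝ) := funext Jd1
  have JW1 : ∀ x, pd (pd ω 1) 1 x = 0 := by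
    intro x
    have hFW : pd ω 1 = fun x => -(pd (pd (fun y => Y y 0) 2) 2 x) :=
      funext (fun x => by linarith [Jc22 x])
    rw [hFW, pd_neg (dPPY 0 2 2), pd_comm (sPY 0 2), hFc21, pd_const]
    ring
  have JW2 : ∀ x, pd (pd ω 1) 2 x = 0 := by
    intro x
    have hFω2 : pd ω 2 = fun x => pd (pd (fun y => Y y 0) 2) 0 x := funext Jω2
    rw [pd_comm hω_smooth, hFω2, pd_comm (sPY 0 2), hFc21]
    exact pd_const 0
  have JW3 : ∀ x, pd (pd ω 1) 3 x = 0 := by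
    intro x
    have hFω3 : pd ω 3 = fun x => pd (pd (fun y => Y y 0) 3) 0 x := funext Jω3
    rw [pd_comm hω_smooth, hFω3, pd_comm (sPY 0 3), hFc31]
    exact pd_const 0
  have JW0 : ∀ x, pd (pd ω 1) 0 x = 0 := by
    intro x
    have h1 : pd (pd (pd (fun y => Y y 0) 0) 0) 1 x = 0 := by
      rw [pd_comm (sPY 0 0), hFd1]; exact pd_const 0
    rw [hFstar] at h1
    have hR : pd (fun x => 2 * pd ω 0 x - pd ω 1 x * H x
          - (1/2) * (pd (fun y => Y y 0) 2 x * pd H 2 x + pd (fun y => Y y 0) 3 x * pd H 3 x)) 1 x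
        = (2 * pd (pd ω 0) 1 x - (pd (pd ω 1) 1 x * H x + pd ω 1 x * pd H 1 x))
          - (1/2) * ((pd (pd (fun y => Y y 0) 2) 1 x * pd H 2 x
              + pd (fun y => Y y 0) 2 x * pd (pd H 2) 1 x)
            + (pd (pd (fun y => Y y 0) 3) 1 x * pd H 3 x
              + pd (fun y => Y y 0) 3 x * pd (pd H 3) 1 x)) := by
      rw [pd_sub (by fun_prop) (by fun_prop), pd_sub (by fun_prop) (by fun_prop),
        pd_const_mul _ (dPω 0), pd_mul (dPω 1) dH, pd_const_mul _ (by fun_prop),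
        pd_add (by fun_prop) (by fun_prop), pd_mul (dPY 0 2) (dPH 2), pd_mul (dPY 0 3) (dPH 3)]
    rw [hR, JW1, hH1, Jc21, Jc31, JH 2, JH 3] at h1
    rw [pd_comm hω_smooth]
    linarith
  have JW : ∀ (j : Fin 4) x, pd (pd ω 1) j x = 0 := by
    intro j x
    fin_cases j
    · exact JW0 x
    · exact JW1 x
    · exact JW2 x
    · exact JW3 x
  -- reductions of the distortion f
  have JQ1 : ∀ x, pd (pd (fun y => Y y 1) 1) 1 x = 2 * pd ω 1 x := by
    intro x
    rw [hF01, pd_sub (by fun_prop) (dPY 0 0), pd_const_mul 2 dω, Jd1]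
    ring
  have JQ2 : ∀ x, pd (pd (fun y => Y y 2) 1) 1 x = 0 := by
    intro x
    rw [hF12, pd_neg (dPY 0 2), Jc21]
    ring
  have JQ3 : ∀ x, pd (pd (fun y => Y y 3) 1) 1 x = 0 := by
    intro x
    rw [hF13, pd_neg (dPY 0 3), Jc31]
    ring
  have Ff0 : (fun x => f x 0) = fun _ => (0:ℝ) := by
    funext x
    rw [hf]
    simp only []
    rw [I11 x]
    have : pd (fun y => pd (fun z => Y z 0) 1 y) 1 x = pd (pd (fun z => Y z 0) 1) 1 x := rfl
    rw [this, JA 1 x]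
    norm_num
  have Ff1 : (fun x => f x 1)
      = fun x => (1/2) * (x 0 * (2 * ω x - pd (fun y => Y y 0) 0 x))
        + (m^2/(8*πv^2)) * ((x 0)^2 * (2 * pd ω 1 x)) + (1/2) * Y x 0 := by
    funext x
    rw [hf]
    simp only [if_pos rfl]
    rw [I01 x]
    have : pd (fun y => pd (fun z => Y z 1) 1 y) 1 x = pd (pd (fun z => Y z 1) 1) 1 x := rfl
    rw [this, JQ1 x]
    simp only [↓reduceIte]
    field_simp
  have Ff2 : (fun x => f x 2)
      = fun x => (-(1/2)) * (x 0 * pd (fun y => Y y 0) 2 x) := by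
    funext x
    rw [hf]
    simp only []
    rw [I12 x]
    have : pd (fun y => pd (fun z => Y z 2) 1 y) 1 x = pd (pd (fun z => Y z 2) 1) 1 x := rfl
    rw [this, JQ2 x]
    rw [if_neg (by decide)]
    norm_num
    ring
  have Ff3 : (fun x => f x 3)
      = fun x => (-(1/2)) * (x 0 * pd (fun y => Y y 0) 3 x) := by
    funext x
    rw [hf]
    simp only []
    rw [I13 x]
    have : pd (fun y => pd (fun z => Y z 3) 1 y) 1 x = pd (pd (fun z => Y z 3) 1) 1 x := rfl
    rw [this, JQ3 x]
    rw [if_neg (by decide)]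
    norm_num
    ring
  -- derivatives of f components
  have pf0 : ∀ (σ : Fin 4) x, pd (fun y => f y 0) σ x = 0 := by
    intro σ x; rw [Ff0]; exact pd_const 0
  have pf1 : ∀ (σ : Fin 4) x, pd (fun y => f y 1) σ x
      = (1/2) * ((if (0:Fin 4) = σ then 1 else 0) * (2 * ω x - pd (fun y => Y y 0) 0 x)
          + x 0 * (2 * pd ω σ x - pd (pd (fun y => Y y 0) 0) σ x))
        + (m^2/(8*πv^2)) * ((if (0:Fin 4) = σ then 1 else 0) * (2 * x 0 * (2 * pd ω 1 x))
          + (x 0)^2 * (2 * pd (pd ω 1) σ x))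
        + (1/2) * pd (fun y => Y y 0) σ x := by
    intro σ x
    rw [Ff1]
    rw [pd_add (by fun_prop) (dY 0 |>.const_mul _), pd_add (by fun_prop) (by fun_prop),
      pd_const_mul _ (by fun_prop), pd_const_mul _ (by fun_prop), pd_const_mul _ (dY 0),
      pd_x0_mul (by fun_prop), pd_x0sq_mul (by fun_prop),
      pd_sub (by fun_prop) (dPY 0 0), pd_const_mul 2 dω, pd_const_mul 2 (dPω 1)]
  have pf2 : ∀ (σ : Fin 4) x, pd (fun y => f y 2) σ x
      = (-(1/2)) * ((if (0:Fin 4) = σ then 1 else 0) * pd (fun y => Y y 0) 2 x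
          + x 0 * pd (pd (fun y => Y y 0) 2) σ x) := by
    intro σ x
    rw [Ff2, pd_const_mul _ (by fun_prop), pd_x0_mul (sPY 0 2)]
  have pf3 : ∀ (σ : Fin 4) x, pd (fun y => f y 3) σ x
      = (-(1/2)) * ((if (0:Fin 4) = σ then 1 else 0) * pd (fun y => Y y 0) 3 x
          + x 0 * pd (pd (fun y => Y y 0) 3) σ x) := by
    intro σ x
    rw [Ff3, pd_const_mul _ (by fun_prop), pd_x0_mul (sPY 0 3)]
  -- Υ components
  have FU0 : (fun x => Υ x 0) = fun x => Y x 0 := by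
    funext x
    rw [hΥ]
    simp only []
    rw [show f x 0 = 0 from congrFun Ff0 x]
    ring
  have FU1 : (fun x => Υ x 1) = fun x => Y x 1 + (m^2/πv^2) * f x 1 := by
    funext x; rw [hΥ]
  have FU2 : (fun x => Υ x 2) = fun x => Y x 2 + (m^2/πv^2) * f x 2 := by
    funext x; rw [hΥ]
  have FU3 : (fun x => Υ x 3) = fun x => Y x 3 + (m^2/πv^2) * f x 3 := by
    funext x; rw [hΥ]
  have df1 : Differentiable ℝ (fun y => f y 1) := by rw [Ff1]; fun_prop
  have df2 : Differentiable ℝ (fun y => f y 2) := by rw [Ff2]; fun_prop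
  have df3 : Differentiable ℝ (fun y => f y 3) := by rw [Ff3]; fun_prop
  have sf1 : ContDiff ℝ (⊤ : ℕ∞) (fun y => f y 1) := by rw [Ff1]; fun_prop
  have sf2 : ContDiff ℝ (⊤ : ℕ∞) (fun y => f y 2) := by rw [Ff2]; fun_prop
  have sf3 : ContDiff ℝ (⊤ : ℕ∞) (fun y => f y 3) := by rw [Ff3]; fun_prop
  have pU0 : ∀ (σ : Fin 4) x, pd (fun y => Υ y 0) σ x = pd (fun y => Y y 0) σ x := by
    intro σ x; rw [FU0]
  have pU1 : ∀ (σ : Fin 4) x, pd (fun y => Υ y 1) σ x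
      = pd (fun y => Y y 1) σ x + (m^2/πv^2) * pd (fun y => f y 1) σ x := by
    intro σ x; rw [FU1, pd_add (dY 1) (df1.const_mul _), pd_const_mul _ df1]
  have pU2 : ∀ (σ : Fin 4) x, pd (fun y => Υ y 2) σ x
      = pd (fun y => Y y 2) σ x + (m^2/πv^2) * pd (fun y => f y 2) σ x := by
    intro σ x; rw [FU2, pd_add (dY 2) (df2.const_mul _), pd_const_mul _ df2]
  have pU3 : ∀ (σ : Fin 4) x, pd (fun y => Υ y 3) σ x
      = pd (fun y => Y y 3) σ x + (m^2/πv^2) * pd (fun y => f y 3) σ x := by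
    intro σ x; rw [FU3, pd_add (dY 3) (df3.const_mul _), pd_const_mul _ df3]
  have sU0 : ContDiff ℝ (⊤ : ℕ∞) (fun x => Υ x 0) := by rw [FU0]; exact sY 0
  have sU1 : ContDiff ℝ (⊤ : ℕ∞) (fun x => Υ x 1) := by rw [FU1]; exact (sY 1).add (contDiff_const.mul sf1)
  have sU2 : ContDiff ℝ (⊤ : ℕ∞) (fun x => Υ x 2) := by rw [FU2]; exact (sY 2).add (contDiff_const.mul sf2)
  have sU3 : ContDiff ℝ (⊤ : ℕ∞) (fun x => Υ x 3) := by rw [FU3]; exact (sY 3).add (contDiff_const.mul sf3)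
  -- pointwise value lemmas
  have Uv0 : ∀ x, Υ x 0 = Y x 0 := fun x => congrFun FU0 x
  have Uv1 : ∀ x, Υ x 1 = Y x 1 + (m^2/πv^2) * f x 1 := fun x => congrFun FU1 x
  have Uv2 : ∀ x, Υ x 2 = Y x 2 + (m^2/πv^2) * f x 2 := fun x => congrFun FU2 x
  have Uv3 : ∀ x, Υ x 3 = Y x 3 + (m^2/πv^2) * f x 3 := fun x => congrFun FU3 x
  have fv1 : ∀ x, f x 1 = (1/2) * (x 0 * (2 * ω x - pd (fun y => Y y 0) 0 x))
      + (m^2/(8*πv^2)) * ((x 0)^2 * (2 * pd ω 1 x)) + (1/2) * Y x 0 := fun x => congrFun Ff1 x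
  have fv2 : ∀ x, f x 2 = (-(1/2)) * (x 0 * pd (fun y => Y y 0) 2 x) := fun x => congrFun Ff2 x
  have fv3 : ∀ x, f x 3 = (-(1/2)) * (x 0 * pd (fun y => Y y 0) 3 x) := fun x => congrFun Ff3 x
  have Jd2 : ∀ x, pd (pd (fun y => Y y 0) 0) 2 x = pd (pd (fun y => Y y 0) 2) 0 x :=
    fun x => pd_comm (sY 0)
  have Jd3 : ∀ x, pd (pd (fun y => Y y 0) 0) 3 x = pd (pd (fun y => Y y 0) 3) 0 x :=
    fun x => pd_comm (sY 0)
  -- the conserved quantity and its derivative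
  have key : ∀ t ∈ Set.Ioo a b, HasDerivAt (fun s =>
      (∑ μ, ∑ ν, Υ (c s) μ * ppMetric H (c s) μ ν * deriv (fun r => c r ν) s) / n s) 0 t := by
    intro t ht
    have hopen : Set.Ioo a b ∈ nhds t := isOpen_Ioo.mem_nhds ht
    have hdc : ∀ i, HasDerivAt (fun s => c s i) (deriv (fun s => c s i) t) t :=
      fun i => (((hc i).contDiffAt hopen).differentiableAt (by simp)).hasDerivAt
    have hdd : ∀ i, HasDerivAt (fun s => deriv (fun r => c r i) s)
        (deriv (fun s => deriv (fun r => c r i) s) t) t := fun i =>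
      ((((hc i).deriv_of_isOpen isOpen_Ioo (m := 1) (WithTop.coe_le_coe.2 le_top)).contDiffAt hopen).differentiableAt one_ne_zero).hasDerivAt
    have hdn : HasDerivAt n (deriv n t) t := ((hn.contDiffAt hopen).differentiableAt (by simp)).hasDerivAt
    have hn0 : n t ≠ 0 := (hnpos t ht).ne'
    have hdH : HasDerivAt (fun s => H (c s))
        (∑ i, pd H i (c t) * deriv (fun s => c s i) t) t := chain_rule hH_smooth hdc
    have hdU0 : HasDerivAt (fun s => Υ (c s) 0)
        (∑ i, pd (fun x => Υ x 0) i (c t) * deriv (fun s => c s i) t) t := chain_rule sU0 hdc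
    have hdU1 : HasDerivAt (fun s => Υ (c s) 1)
        (∑ i, pd (fun x => Υ x 1) i (c t) * deriv (fun s => c s i) t) t := chain_rule sU1 hdc
    have hdU2 : HasDerivAt (fun s => Υ (c s) 2)
        (∑ i, pd (fun x => Υ x 2) i (c t) * deriv (fun s => c s i) t) t := chain_rule sU2 hdc
    have hdU3 : HasDerivAt (fun s => Υ (c s) 3)
        (∑ i, pd (fun x => Υ x 3) i (c t) * deriv (fun s => c s i) t) t := chain_rule sU3 hdc
    have hNum : (fun s => ∑ μ, ∑ ν, Υ (c s) μ * ppMetric H (c s) μ ν * deriv (fun r => c r ν) s)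
        = fun s => Υ (c s) 0 * (H (c s) * deriv (fun r => c r 0) s + deriv (fun r => c r 1) s)
          + Υ (c s) 1 * deriv (fun r => c r 0) s
          + Υ (c s) 2 * deriv (fun r => c r 2) s
          + Υ (c s) 3 * deriv (fun r => c r 3) s := by
      funext s
      simp [Fin.sum_univ_four, ppMetric]
      try ring
    have hdNumC : HasDerivAt (fun s =>
        Υ (c s) 0 * (H (c s) * deriv (fun r => c r 0) s + deriv (fun r => c r 1) s)
          + Υ (c s) 1 * deriv (fun r => c r 0) s
          + Υ (c s) 2 * deriv (fun r => c r 2) s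
          + Υ (c s) 3 * deriv (fun r => c r 3) s)
        ((∑ i, pd (fun x => Υ x 0) i (c t) * deriv (fun s => c s i) t)
            * (H (c t) * deriv (fun r => c r 0) t + deriv (fun r => c r 1) t)
          + Υ (c t) 0 * ((∑ i, pd H i (c t) * deriv (fun s => c s i) t) * deriv (fun r => c r 0) t
            + H (c t) * deriv (fun s => deriv (fun r => c r 0) s) t
            + deriv (fun s => deriv (fun r => c r 1) s) t)
          + ((∑ i, pd (fun x => Υ x 1) i (c t) * deriv (fun s => c s i) t) * deriv (fun r => c r 0) t
            + Υ (c t) 1 * deriv (fun s => deriv (fun r => c r 0) s) t)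
          + ((∑ i, pd (fun x => Υ x 2) i (c t) * deriv (fun s => c s i) t) * deriv (fun r => c r 2) t
            + Υ (c t) 2 * deriv (fun s => deriv (fun r => c r 2) s) t)
          + ((∑ i, pd (fun x => Υ x 3) i (c t) * deriv (fun s => c s i) t) * deriv (fun r => c r 3) t
            + Υ (c t) 3 * deriv (fun s => deriv (fun r => c r 3) s) t)) t := by
      have h0 := hdU0.mul ((hdH.mul (hdd 0)).add (hdd 1))
      have h1 := hdU1.mul (hdd 0)
      have h2 := hdU2.mul (hdd 2)
      have h3 := hdU3.mul (hdd 3)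
      have htot := ((h0.add h1).add h2).add h3
      exact htot
    have hdQ := hdNumC.div hdn hn0
    have hfun : (fun s => (∑ μ, ∑ ν, Υ (c s) μ * ppMetric H (c s) μ ν * deriv (fun r => c r ν) s) / n s)
        = fun s => (Υ (c s) 0 * (H (c s) * deriv (fun r => c r 0) s + deriv (fun r => c r 1) s)
          + Υ (c s) 1 * deriv (fun r => c r 0) s
          + Υ (c s) 2 * deriv (fun r => c r 2) s
          + Υ (c s) 3 * deriv (fun r => c r 3) s) / n s := by
      funext s
      rw [congrFun hNum s]
    rw [hfun]
    refine hdQ.congr_deriv ?_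
    rw [div_eq_zero_iff]
    left
    obtain ⟨K, hK⟩ : ∃ K, K = m^2/πv^2 := ⟨_, rfl⟩
    obtain ⟨ρ, hρ⟩ : ∃ ρ, deriv n t = ρ * n t := ⟨deriv n t / n t, by field_simp⟩
    have hρ' : deriv n t / n t = ρ := by rw [hρ]; field_simp
    have hK8 : m^2/(8*πv^2) = K/8 := by rw [hK]; field_simp
    have hm2 : m^2 = K*πv^2 := by rw [hK]; field_simp
    have hu1 : deriv (fun s => c s 0) t = πv * n t := by
      have h := hπv t ht
      field_simp at h
      linarith
    have hu2 : deriv (fun s => deriv (fun r => c r 0) s) t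
        = ρ * deriv (fun s => c s 0) t := by
      have h := heq3 t ht; rw [hρ'] at h; linarith
    have hv2 : deriv (fun s => deriv (fun r => c r 1) s) t
        = ρ * deriv (fun s => c s 1) t
          - pd H 2 (c t) * deriv (fun s => c s 2) t * deriv (fun s => c s 0) t
          - pd H 3 (c t) * deriv (fun s => c s 3) t * deriv (fun s => c s 0) t
          - (1/2) * pd H 0 (c t) * (deriv (fun s => c s 0) t)^2 := by
      have h := heq2 t ht; rw [hρ'] at h; linarith
    have hx2 : deriv (fun s => deriv (fun r => c r 2) s) t
        = (1/2) * pd H 2 (c t) * (deriv (fun s => c s 0) t)^2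
          + ρ * deriv (fun s => c s 2) t := by
      have h := (heq4 t ht).1; rw [hρ'] at h; linarith
    have hy2 : deriv (fun s => deriv (fun r => c r 3) s) t
        = (1/2) * pd H 3 (c t) * (deriv (fun s => c s 0) t)^2
          + ρ * deriv (fun s => c s 3) t := by
      have h := (heq4 t ht).2; rw [hρ'] at h; linarith
    have hC := heq1 t ht
    rw [hu1, hm2] at hC
    have if00 : (if (0:Fin 4) = 0 then (1:ℝ) else 0) = 1 := if_pos rfl
    have if01 : (if (0:Fin 4) = 1 then (1:ℝ) else 0) = 0 := if_neg (by decide)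
    have if02 : (if (0:Fin 4) = 2 then (1:ℝ) else 0) = 0 := if_neg (by decide)
    have if03 : (if (0:Fin 4) = 3 then (1:ℝ) else 0) = 0 := if_neg (by decide)
    simp only [Fin.sum_univ_four]
    simp only [hv2, hx2, hy2, hu2]
    simp only [pU0, pU1, pU2, pU3]
    simp only [pf1, pf2, pf3, if00, if01, if02, if03, eq_self_iff_true, if_true]
    simp only [Uv0, Uv1, Uv2, Uv3]
    simp only [fv1, fv2, fv3]
    simp only [hK8, ← hK]
    simp only [I11, I12, I13, I01, I22, I33, I23, I02, I03, I00', hstar, Jd1, Jd2, Jd3,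
      Jc21, Jc22, Jc23, Jc31, Jc32, Jc33, Jω2, Jω3, JW, hH1]
    simp only [hu1, hρ]
    have h2p : (2*(πv*n t)) ≠ 0 := by
      have := (hnpos t ht).ne'
      intro hcon
      apply hπv0
      rcases mul_eq_zero.1 hcon with h' | h'
      · norm_num at h'
      · rcases mul_eq_zero.1 h' with h'' | h''
        · exact h''
        · exact absurd h'' this
    apply mul_left_cancel₀ h2p
    linear_combination (n t * (πv * n t) * (2 * ω (c t) + K * (c t 0) * pd ω 1 (c t))) * hC
  -- conclude constancy on the interval
  intro t₁ ht₁ t₂ ht₂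
  have hdiff : DifferentiableOn ℝ (fun s =>
      (∑ μ, ∑ ν, Υ (c s) μ * ppMetric H (c s) μ ν * deriv (fun r => c r ν) s) / n s)
      (Set.Ioo a b) := fun s hs => ((key s hs).differentiableAt).differentiableWithinAt
  have hzero : ∀ s ∈ Set.Ioo a b, fderivWithin ℝ (fun s =>
      (∑ μ, ∑ ν, Υ (c s) μ * ppMetric H (c s) μ ν * deriv (fun r => c r ν) s) / n s)
      (Set.Ioo a b) s = 0 := by
    intro s hs
    rw [fderivWithin_of_isOpen isOpen_Ioo hs, ((key s hs).hasFDerivAt).fderiv]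
    apply ContinuousLinearMap.ext
    intro v
    simp
  have hconst := (convex_Ioo a b).is_const_of_fderivWithin_eq_zero hdiff hzero ht₁ ht₂
  simpa using hconst
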